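/- Let P be a poset such that mxl(P) is finite and is a cutset of P. Then the poset 𝒟(P) = Γ(P, mxl(P)), ordered by inclusion, has no infinite ascending chains. -/

import Mathlib

/-!
A component `C` of `⟨A⟩` with `A ⊆ X` contains every `a ∈ A` lying above one of its points, so
it is also the component of `⟨C ∩ X⟩` through any of its points. Hence `C ↦ C ∩ X` is strictly
monotone on `crosscut X`, and a strictly ascending chain in `𝒟(P)` would give an infinite strictly
ascending chain of subsets of the finite set `mxl(P)`.
-/


variable {α : Type*}

def belowSet [PartialOrder α] (A : Set α) : Set α := {p | ∃ a ∈ A, p ≤ a}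

def aboveSet [PartialOrder α] (A : Set α) : Set α := {p | ∃ a ∈ A, a ≤ p}

def connRel [PartialOrder α] (S : Set α) (x y : α) : Prop :=
  Relation.ReflTransGen (fun a b => a ∈ S ∧ b ∈ S ∧ (a ≤ b ∨ b ≤ a)) x y

def connComp [PartialOrder α] (S : Set α) (x : α) : Set α := {y | connRel S x y}

def IsConnSub [PartialOrder α] (S : Set α) : Prop :=
  S.Nonempty ∧ ∀ x ∈ S, ∀ y ∈ S, connRel S x y

def IsConnCompOf [PartialOrder α] (S C : Set α) : Prop := ∃ x ∈ S, C = connComp S x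

def crosscut [PartialOrder α] (X : Set α) : Set (Set α) :=
  {C | ∃ A : Set α, A ⊆ X ∧ A.Nonempty ∧ IsConnCompOf (belowSet A) C}

def crosscutU [PartialOrder α] (X : Set α) : Set (Set α) :=
  {C | ∃ A : Set α, A ⊆ X ∧ A.Nonempty ∧ IsConnCompOf (aboveSet A) C}

def mxl (α : Type*) [PartialOrder α] : Set α := {a | IsMax a}
def mnl (α : Type*) [PartialOrder α] : Set α := {a | IsMin a}

def DSet (α : Type*) [PartialOrder α] : Set (Set α) := crosscut (mxl α)
def USet (α : Type*) [PartialOrder α] : Set (Set α) := crosscutU (mnl α)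

def FPP (β : Type*) [Preorder β] : Prop := ∀ f : β → β, Monotone f → ∃ x, f x = x

section
variable [PartialOrder α] {S T X : Set α} {x y : α}

lemma connRel_mono (h : S ⊆ T) : connRel S x y → connRel T x y :=
  Relation.ReflTransGen.mono (fun _ _ hab => ⟨h hab.1, h hab.2.1, hab.2.2⟩) x y

lemma connRel_symm (hxy : connRel S x y) : connRel S y x := by
  induction hxy with
  | refl => exact Relation.ReflTransGen.refl
  | tail _ hbc ih => exact (Relation.ReflTransGen.single ⟨hbc.2.1, hbc.1, hbc.2.2.symm⟩).trans ih

lemma connRel_mem_right (hxy : connRel S x y) (hx : x ∈ S) : y ∈ S := by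
  induction hxy with
  | refl => exact hx
  | tail _ hbc _ => exact hbc.2.1

lemma connRel_of_connComp_subset (hT : connComp S x ⊆ T) (hxy : connRel S x y) :
    connRel T x y := by
  induction hxy with
  | refl => exact Relation.ReflTransGen.refl
  | @tail b c hb hbc ih => exact ih.tail ⟨hT hb, hT (hb.tail hbc), hbc.2.2⟩

lemma connComp_eq_of_mem (hx : x ∈ connComp S y) : connComp S y = connComp S x := by
  ext z
  exact ⟨fun hz => (connRel_symm hx).trans hz, fun hz => Relation.ReflTransGen.trans hx hz⟩

lemma nonempty_of_mem_crosscut {C : Set α} (hC : C ∈ crosscut X) : C.Nonempty := by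
  obtain ⟨A, -, -, x₀, -, rfl⟩ := hC
  exact ⟨x₀, Relation.ReflTransGen.refl⟩

lemma eq_connComp_belowSet_inter_of_mem_crosscut {C : Set α} (hC : C ∈ crosscut X)
    (hx : x ∈ C) : C = connComp (belowSet (C ∩ X)) x := by
  obtain ⟨A, hAX, -, x₀, hx₀, rfl⟩ := hC
  have hxS : x ∈ belowSet A := connRel_mem_right hx hx₀
  rw [connComp_eq_of_mem hx]
  set C := connComp (belowSet A) x
  have hC_sub : C ⊆ belowSet A := fun y hy => connRel_mem_right hy hxS
  have hC_below : C ⊆ belowSet (C ∩ X) := by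
    intro y hy
    obtain ⟨a, haA, hya⟩ := hC_sub hy
    have haC : a ∈ C := hy.tail ⟨hC_sub hy, ⟨a, haA, le_rfl⟩, Or.inl hya⟩
    exact ⟨a, ⟨haC, hAX haA⟩, hya⟩
  have hbelow_sub : belowSet (C ∩ X) ⊆ belowSet A := by
    rintro p ⟨m, ⟨hmC, -⟩, hpm⟩
    obtain ⟨a, haA, hma⟩ := hC_sub hmC
    exact ⟨a, haA, hpm.trans hma⟩
  ext y
  exact ⟨connRel_of_connComp_subset hC_below, connRel_mono hbelow_sub⟩

lemma inter_ssubset_inter_of_mem_crosscut {C₁ C₂ : Set α} (h₁ : C₁ ∈ crosscut X)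
    (h₂ : C₂ ∈ crosscut X) (h : C₁ ⊂ C₂) : C₁ ∩ X ⊂ C₂ ∩ X := by
  refine ⟨Set.inter_subset_inter_left _ h.1, fun hsub => h.2 ?_⟩
  obtain ⟨x, hx⟩ := nonempty_of_mem_crosscut h₁
  have hX : C₂ ∩ X = C₁ ∩ X := hsub.antisymm (Set.inter_subset_inter_left _ h.1)
  rw [eq_connComp_belowSet_inter_of_mem_crosscut h₂ (h.1 hx), hX,
    ← eq_connComp_belowSet_inter_of_mem_crosscut h₁ hx]

end

theorem stmt12_general [PartialOrder α]
    (hfin : (mxl α).Finite) :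
    ¬ ∃ c : ℕ → Set α, (∀ n, c n ∈ DSet α) ∧ ∀ n, c n ⊂ c (n + 1) := by
  rintro ⟨c, hc, hssubset⟩
  have hmono : StrictMono fun n => c n ∩ mxl α := strictMono_nat_of_lt_succ fun n =>
    inter_ssubset_inter_of_mem_crosscut (hc n) (hc (n + 1)) (hssubset n)
  exact Set.infinite_range_of_injective hmono.injective <|
    hfin.powerset.subset <| Set.range_subset_iff.2 fun _ => Set.inter_subset_right

theorem stmt12 [PartialOrder α]
    (hfin : (mxl α).Finite)
    (hcut : ∀ x : α, ∃ m ∈ mxl α, x ≤ m) :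
    ¬ ∃ c : ℕ → Set α, (∀ n, c n ∈ DSet α) ∧ ∀ n, c n ⊂ c (n + 1) :=
  stmt12_general hfin
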